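/- arXiv:1904.06320 — 2 statements merged into one kernel-verified Lean document; each statement's English description precedes it below -/
import Mathlib

section
/- Let q ≥ 2 be prime, let ẑ ∈ ℤ₈ with ẑ ≠ 0, and let d̂ ∈ {0,1}ⁿ with Hamming weight |d̂|_H ≥ n/8. For s uniform in {0,1}ⁿ, the Fourier coefficient |E_s[e^{−2πi ẑ (d̂·s)/8}]| satisfies |E_s[e^{−2πi ẑ (d̂·s)/8}]| ≤ cos(π/8)^{n/8} ≤ 2^{−n/80}. -/
/-!
Averaging over uniform `s` factorises the coefficient as `∏ᵢ (1 + ω ^ d̂ᵢ) / 2` with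
`ω = e^{-2πi ẑ/8}`. Coordinates with `d̂ᵢ = 0` contribute `1`, and each of the at least `n/8`
coordinates with `d̂ᵢ = 1` contributes `|cos (π ẑ / 8)| ≤ cos (π / 8)`, since
`|1 + e^{2ix}| = 2 |cos x|`. The second inequality is `cos (π / 8) ^ 10 = ((2 + √2) / 4) ^ 5 < 1 / 2`.
-/

open scoped BigOperators
open Real Complex

lemma Complex.norm_one_add_exp_two_mul_mul_I (x : ℝ) :
    ‖1 + exp (2 * x * I)‖ = 2 * |Real.cos x| := by
  have h : 1 + exp (2 * x * I) = exp (x * I) * (2 * (Real.cos x : ℂ)) := by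
    rw [ofReal_cos, Complex.cos, mul_div_cancel₀ _ two_ne_zero, mul_add, ← Complex.exp_add,
      ← Complex.exp_add]
    ring_nf
    simp [add_comm]
  rw [h, norm_mul, norm_exp_ofReal_mul_I, one_mul, norm_mul, Complex.norm_two, norm_real,
    Real.norm_eq_abs]

lemma Real.abs_cos_le_cos_of_mem_Icc {a x : ℝ} (ha : 0 ≤ a) (hx : x ∈ Set.Icc a (π - a)) :
    |Real.cos x| ≤ Real.cos a := by
  obtain ⟨hax, hxa⟩ := hx
  rw [abs_le]
  constructor
  · rw [neg_le, ← Real.cos_pi_sub]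
    exact Real.cos_le_cos_of_nonneg_of_le_pi ha (by linarith) (by linarith)
  · exact Real.cos_le_cos_of_nonneg_of_le_pi ha (by linarith) hax

lemma abs_cos_pi_mul_div_le {N m : ℕ} (hm : 0 < m) (hmN : m < N) :
    |Real.cos (π * m / N)| ≤ Real.cos (π / N) := by
  have hN : (0 : ℝ) < N := by exact_mod_cast hm.trans hmN
  apply Real.abs_cos_le_cos_of_mem_Icc (by positivity)
  have h1 : (1 : ℝ) ≤ m := by exact_mod_cast hm
  have h2 : (m : ℝ) + 1 ≤ N := by exact_mod_cast hmN
  constructor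
  · rw [div_le_div_iff_of_pos_right hN]; nlinarith [pi_pos]
  · rw [le_sub_iff_add_le, ← add_div, div_le_iff₀ hN]; nlinarith [pi_pos]

lemma sum_pi_fin_two_exp_mul_sum {ι : Type*} [Fintype ι] [DecidableEq ι] (c : ℂ) (d : ι → ℕ) :
    ∑ s : ι → Fin 2, exp (c * ((∑ i, d i * (s i : ℕ) : ℕ) : ℂ)) = ∏ i, (1 + exp (c * d i)) := by
  have h : ∀ i, 1 + exp (c * d i) = ∑ b : Fin 2, exp (c * ((d i * (b : ℕ) : ℕ) : ℂ)) := by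
    intro i; simp [Fin.sum_univ_two]
  simp_rw [h, Finset.prod_univ_sum, Fintype.piFinset_univ, ← Complex.exp_sum, Nat.cast_sum,
    Finset.mul_sum]

lemma norm_one_add_exp_neg_two_pi_mul_div_le {N m : ℕ} (hm : 0 < m) (hmN : m < N) (b : Fin 2) :
    ‖1 + exp (-2 * π * I * m / N * (b : ℕ))‖ / 2 ≤ if b = 1 then Real.cos (π / N) else 1 := by
  fin_cases b
  · norm_num
  · have h : -2 * π * I * m / N = 2 * ((-(π * m / N) : ℝ) : ℂ) * I := by push_cast; ring
    simp only [Fin.mk_one, Nat.cast_one, mul_one, if_true, h,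
      Complex.norm_one_add_exp_two_mul_mul_I, Real.cos_neg]
    linarith [abs_cos_pi_mul_div_le hm hmN]

lemma norm_inv_two_pow_mul_sum_exp_dot_le {ι : Type*} [Fintype ι] [DecidableEq ι] {N m : ℕ}
    (hm : 0 < m) (hmN : m < N) (d : ι → Fin 2) :
    ‖((2 : ℂ) ^ Fintype.card ι)⁻¹ * ∑ s : ι → Fin 2,
        exp (-2 * π * I * m * ((∑ i, (d i : ℕ) * (s i : ℕ) : ℕ) : ℂ) / N)‖
      ≤ Real.cos (π / N) ^ (Finset.univ.filter fun i => d i = 1).card := by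
  simp_rw [show ∀ k : ℂ, -2 * π * I * m * k / N = -2 * π * I * m / N * k from fun k => by ring]
  rw [sum_pi_fin_two_exp_mul_sum, norm_mul, norm_inv, norm_pow, Complex.norm_two, norm_prod,
    inv_mul_eq_div, ← Finset.card_univ, ← Finset.prod_const, ← Finset.prod_div_distrib]
  calc _ ≤ ∏ i, if d i = 1 then Real.cos (π / N) else 1 :=
        Finset.prod_le_prod (fun i _ => by positivity) fun i _ =>
          norm_one_add_exp_neg_two_pi_mul_div_le hm hmN (d i)
    _ = _ := by rw [Finset.prod_ite, Finset.prod_const, Finset.prod_const_one, mul_one]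

lemma Real.cos_pi_div_eight_le_two_rpow : Real.cos (π / 8) ≤ (2 : ℝ) ^ (-(1 : ℝ) / 10) := by
  have hc : 0 ≤ Real.cos (π / 8) :=
    Real.cos_nonneg_of_mem_Icc ⟨by linarith [pi_pos], by linarith [pi_pos]⟩
  have hsq : Real.cos (π / 8) ^ 2 ≤ 0.854 := by
    rw [Real.cos_sq, show 2 * (π / 8) = π / 4 by ring, Real.cos_pi_div_four]
    nlinarith [Real.sq_sqrt (show (0 : ℝ) ≤ 2 by norm_num), Real.sqrt_nonneg 2]
  apply le_of_pow_le_pow_left₀ (n := 10) (by norm_num) (by positivity)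
  rw [← Real.rpow_natCast ((2 : ℝ) ^ _), ← Real.rpow_mul (by norm_num)]
  calc Real.cos (π / 8) ^ 10 = (Real.cos (π / 8) ^ 2) ^ 5 := by ring
    _ ≤ 0.854 ^ 5 := pow_le_pow_left₀ (by positivity) hsq 5
    _ ≤ (2 : ℝ) ^ (-(1 : ℝ) / 10 * (10 : ℕ)) := by norm_num

/-- For nonzero `ẑ ∈ ℤ₈` and `d̂ ∈ {0,1}ⁿ` of Hamming weight at least `n/8`,
the Fourier coefficient `|E_s[e^{−2πi ẑ (d̂·s)/8}]|` over uniform `s ∈ {0,1}ⁿ`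
is bounded by `cos(π/8)^{n/8} ≤ 2^{−n/80}`. -/
theorem stmt4 (n : ℕ) (z : ZMod 8) (hz : z ≠ 0) (d : Fin n → Fin 2)
    (hd : (n : ℝ) / 8 ≤ (Finset.univ.filter fun i => d i = 1).card) :
    ‖(((2 : ℂ) ^ n)⁻¹ * ∑ s : Fin n → Fin 2,
        Complex.exp ((-2 * Real.pi * Complex.I * (z.val : ℂ) *
          ((∑ i, (d i : ℕ) * (s i : ℕ) : ℕ) : ℂ)) / 8))‖
      ≤ Real.cos (Real.pi / 8) ^ ((n : ℝ) / 8) ∧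
    Real.cos (Real.pi / 8) ^ ((n : ℝ) / 8) ≤ (2 : ℝ) ^ (-(n : ℝ) / 80) := by
  have hz0 : 0 < z.val := (ZMod.val_pos).2 hz
  have hc : 0 < Real.cos (π / 8) :=
    Real.cos_pos_of_mem_Ioo ⟨by linarith [pi_pos], by linarith [pi_pos]⟩
  constructor
  · calc _ ≤ Real.cos (π / 8) ^ (Finset.univ.filter fun i => d i = 1).card := by
          simpa using norm_inv_two_pow_mul_sum_exp_dot_le hz0 (ZMod.val_lt z) d
      _ ≤ Real.cos (π / 8) ^ ((n : ℝ) / 8) := by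
          rw [← Real.rpow_natCast]
          exact Real.rpow_le_rpow_of_exponent_ge hc (Real.cos_le_one _) hd
  · calc Real.cos (π / 8) ^ ((n : ℝ) / 8) ≤ ((2 : ℝ) ^ (-(1 : ℝ) / 10)) ^ ((n : ℝ) / 8) :=
          Real.rpow_le_rpow hc.le Real.cos_pi_div_eight_le_two_rpow (by positivity)
      _ = (2 : ℝ) ^ (-(n : ℝ) / 80) := by
          rw [← Real.rpow_mul (by norm_num)]; ring_nf
end

section
/- Let |ψ⟩ ∈ H_A ⊗ H_B and let Z, X be binary observables (Hermitian with Z² = X² = Id) on H_A satisfying ‖{Z,X} ⊗ Id_B |ψ⟩‖² ≤ δ. Then there exists an isometry V : H_A → ℂ² ⊗ H_{A'} such that ‖(Z − V†(σ_Z⊗Id)V) ⊗ Id_B |ψ⟩‖² = O(√δ) and ‖(X − V†(σ_X⊗Id)V) ⊗ Id_B |ψ⟩‖² = O(√δ). -/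
/-!
Split `H_A` into the `±1` eigenspaces of `Z`, with projections `(1 ± Z)/2`, and let
`V ψ = ((1 + Z)ψ/2, X(1 - Z)ψ/2) ∈ ℂ² ⊗ H_A`. Since `X² = 1` this is an isometry, and
`V†(σ_Z ⊗ 1)V = (1 + Z)/2 - (1 - Z)/2 = Z` exactly. The off-diagonal blocks give
`V†(σ_X ⊗ 1)V = (X - ZXZ)/2`, so `X - V†(σ_X ⊗ 1)V = Z{Z,X}/2`, whose squared norm on `ψ`
is `‖{Z,X} ⊗ 1 ψ‖²/4 ≤ min(δ, 4)/4 ≤ √δ`, the bound `4` because `{Z,X}` is a sum of two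
unitaries.
-/

open Matrix
open scoped Kronecker

noncomputable def pauliZ : Matrix (Fin 2) (Fin 2) ℂ := !![1, 0; 0, -1]
noncomputable def pauliX : Matrix (Fin 2) (Fin 2) ℂ := !![0, 1; 1, 0]

/-- The squared ℓ² norm of a bipartite state vector. -/
noncomputable def vecNormSq {a b : ℕ} (v : Fin a × Fin b → ℂ) : ℝ :=
  ∑ p, ‖v p‖ ^ 2

theorem mul_mul_cancel_of_mul_self_eq_one {M : Type*} [Monoid M] {a : M} (h : a * a = 1)
    (b : M) : b * a * a = b := by
  rw [mul_assoc, h, mul_one]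

theorem IsSelfAdjoint.mem_unitary_of_mul_self_eq_one {R : Type*} [Monoid R] [StarMul R] {a : R}
    (ha : IsSelfAdjoint a) (h : a * a = 1) : a ∈ unitary R := by
  rw [Unitary.mem_iff, ha.star_eq]
  exact ⟨h, h⟩

namespace Matrix

section StackRows

variable {ι n m R : Type*} [Fintype ι] [Fintype n]

def stackRows (F : ι → Matrix n m R) : Matrix (ι × n) m R :=
  of fun p k => F p.1 p.2 k

theorem stackRows_conjTranspose_mul_stackRows [NonUnitalNonAssocSemiring R] [StarRing R]
    {l : Type*} (G : ι → Matrix n l R) (F : ι → Matrix n m R) :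
    (stackRows G)ᴴ * stackRows F = ∑ i, (G i)ᴴ * F i := by
  ext k l
  simp [mul_apply, stackRows, Fintype.sum_prod_type, sum_apply]

theorem kronecker_one_mul_stackRows [CommSemiring R] [DecidableEq n] (M : Matrix ι ι R)
    (F : ι → Matrix n m R) :
    (M ⊗ₖ (1 : Matrix n n R)) * stackRows F = stackRows fun i => ∑ j, M i j • F j := by
  ext ⟨i, x⟩ k
  simp [mul_apply, stackRows, Fintype.sum_prod_type, sum_apply, one_apply]

theorem stackRows_conjTranspose_mul_kronecker_one_mul [CommSemiring R] [StarRing R]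
    [DecidableEq n] (F : ι → Matrix n m R) (M : Matrix ι ι R) :
    (stackRows F)ᴴ * (M ⊗ₖ (1 : Matrix n n R)) * stackRows F
      = ∑ i, ∑ j, M i j • ((F i)ᴴ * F j) := by
  simp only [Matrix.mul_assoc, kronecker_one_mul_stackRows, stackRows_conjTranspose_mul_stackRows,
    Matrix.mul_sum, Matrix.mul_smul]

end StackRows

theorem kronecker_one_isometry {R m n l : Type*} [CommSemiring R] [StarRing R] [Fintype m]
    [DecidableEq n] [Fintype l] [DecidableEq l] {A : Matrix m n R} (hA : Aᴴ * A = 1) :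
    (A ⊗ₖ (1 : Matrix l l R))ᴴ * (A ⊗ₖ (1 : Matrix l l R)) = 1 := by
  rw [conjTranspose_kronecker, conjTranspose_one, ← mul_kronecker_mul, hA, Matrix.one_mul,
    one_kronecker_one]

theorem norm_toLp_mulVec_of_isometry {𝕜 m n : Type*} [RCLike 𝕜] [Fintype m] [Fintype n]
    [DecidableEq n] {U : Matrix m n 𝕜} (hU : Uᴴ * U = 1) (v : n → 𝕜) :
    ‖WithLp.toLp 2 (U *ᵥ v)‖ = ‖WithLp.toLp 2 v‖ := by
  have h : inner 𝕜 (WithLp.toLp 2 (U *ᵥ v)) (WithLp.toLp 2 (U *ᵥ v))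
      = inner 𝕜 (WithLp.toLp 2 v) (WithLp.toLp 2 v) := by
    rw [EuclideanSpace.inner_toLp_toLp, EuclideanSpace.inner_toLp_toLp, dotProduct_comm,
      star_mulVec, dotProduct_mulVec, vecMul_vecMul, hU, vecMul_one, dotProduct_comm]
  rw [← sq_eq_sq₀ (norm_nonneg _) (norm_nonneg _), ← inner_self_eq_norm_sq (𝕜 := 𝕜),
    ← inner_self_eq_norm_sq (𝕜 := 𝕜), h]

end Matrix

section SwapIsometry

variable {n : Type*} [Fintype n] [DecidableEq n] {Z X : Matrix n n ℂ}

noncomputable def swapIsometry (Z X : Matrix n n ℂ) : Matrix (Fin 2 × n) n ℂ :=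
  stackRows ![(1/2 : ℂ) • (1 + Z), X * ((1/2 : ℂ) • (1 - Z))]

theorem swapIsometry_conj_kronecker_one (M : Matrix (Fin 2) (Fin 2) ℂ) (hZ : Z.IsHermitian)
    (hX : X.IsHermitian) :
    (swapIsometry Z X)ᴴ * (M ⊗ₖ (1 : Matrix n n ℂ)) * swapIsometry Z X
      = M 0 0 • ((1/2 : ℂ) • (1 + Z) * ((1/2 : ℂ) • (1 + Z)))
        + M 0 1 • ((1/2 : ℂ) • (1 + Z) * (X * ((1/2 : ℂ) • (1 - Z))))
        + M 1 0 • ((1/2 : ℂ) • (1 - Z) * X * ((1/2 : ℂ) • (1 + Z)))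
        + M 1 1 • ((1/2 : ℂ) • (1 - Z) * X * (X * ((1/2 : ℂ) • (1 - Z)))) := by
  simp [swapIsometry, stackRows_conjTranspose_mul_kronecker_one_mul, Fin.sum_univ_two, hZ.eq,
    hX.eq, add_assoc]

theorem swapIsometry_conjTranspose_mul_self (hZ : Z.IsHermitian) (hX : X.IsHermitian)
    (hZ2 : Z * Z = 1) (hX2 : X * X = 1) : (swapIsometry Z X)ᴴ * swapIsometry Z X = 1 := by
  have h := swapIsometry_conj_kronecker_one 1 hZ hX
  rw [one_kronecker_one, Matrix.mul_one] at h
  rw [h]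
  simp only [one_apply_eq, one_apply_ne, ne_eq, zero_ne_one, one_ne_zero, not_false_eq_true,
    one_smul, zero_smul]
  simp only [smul_mul_assoc, mul_smul_comm, mul_add, add_mul, mul_sub, sub_mul, one_mul, mul_one,
    ← Matrix.mul_assoc, hZ2, hX2, mul_mul_cancel_of_mul_self_eq_one hX2]
  module

theorem swapIsometry_conj_pauliZ (hZ : Z.IsHermitian) (hX : X.IsHermitian)
    (hZ2 : Z * Z = 1) (hX2 : X * X = 1) :
    (swapIsometry Z X)ᴴ * (pauliZ ⊗ₖ (1 : Matrix n n ℂ)) * swapIsometry Z X = Z := by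
  rw [swapIsometry_conj_kronecker_one _ hZ hX]
  simp only [pauliZ, of_apply, cons_val', cons_val_zero, cons_val_one, empty_val',
    cons_val_fin_one, one_smul, zero_smul, neg_smul]
  simp only [smul_mul_assoc, mul_smul_comm, mul_add, add_mul, mul_sub, sub_mul, one_mul, mul_one,
    ← Matrix.mul_assoc, hZ2, hX2, mul_mul_cancel_of_mul_self_eq_one hX2]
  module

theorem sub_swapIsometry_conj_pauliX (hZ : Z.IsHermitian) (hX : X.IsHermitian)
    (hZ2 : Z * Z = 1) :
    X - (swapIsometry Z X)ᴴ * (pauliX ⊗ₖ (1 : Matrix n n ℂ)) * swapIsometry Z X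
      = (1/2 : ℂ) • (Z * (Z * X + X * Z)) := by
  rw [swapIsometry_conj_kronecker_one _ hZ hX]
  simp only [pauliX, of_apply, cons_val', cons_val_zero, cons_val_one, empty_val',
    cons_val_fin_one, one_smul, zero_smul]
  simp only [smul_mul_assoc, mul_smul_comm, mul_add, add_mul, mul_sub, sub_mul, one_mul, mul_one,
    ← Matrix.mul_assoc, hZ2]
  module

end SwapIsometry

section VecNormSq

variable {a b : ℕ}

theorem vecNormSq_eq_norm_sq (v : Fin a × Fin b → ℂ) :
    vecNormSq v = ‖WithLp.toLp 2 v‖ ^ 2 := by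
  rw [EuclideanSpace.norm_sq_eq]
  rfl

theorem vecNormSq_nonneg (v : Fin a × Fin b → ℂ) : 0 ≤ vecNormSq v := by
  rw [vecNormSq_eq_norm_sq]
  positivity

theorem vecNormSq_smul (c : ℂ) (v : Fin a × Fin b → ℂ) :
    vecNormSq (c • v) = ‖c‖ ^ 2 * vecNormSq v := by
  rw [vecNormSq_eq_norm_sq, vecNormSq_eq_norm_sq, WithLp.toLp_smul, norm_smul, mul_pow]

theorem vecNormSq_mulVec_of_isometry {U : Matrix (Fin a × Fin b) (Fin a × Fin b) ℂ}
    (hU : Uᴴ * U = 1) (v : Fin a × Fin b → ℂ) : vecNormSq (U *ᵥ v) = vecNormSq v := by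
  rw [vecNormSq_eq_norm_sq, vecNormSq_eq_norm_sq, norm_toLp_mulVec_of_isometry hU]

theorem vecNormSq_add_mulVec_le {U W : Matrix (Fin a × Fin b) (Fin a × Fin b) ℂ}
    (hU : Uᴴ * U = 1) (hW : Wᴴ * W = 1) (v : Fin a × Fin b → ℂ) :
    vecNormSq ((U + W) *ᵥ v) ≤ 4 * vecNormSq v := by
  have h : ‖WithLp.toLp 2 ((U + W) *ᵥ v)‖ ≤ 2 * ‖WithLp.toLp 2 v‖ := calc
    _ ≤ ‖WithLp.toLp 2 (U *ᵥ v)‖ + ‖WithLp.toLp 2 (W *ᵥ v)‖ := by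
      rw [add_mulVec, WithLp.toLp_add]
      exact norm_add_le _ _
    _ = 2 * ‖WithLp.toLp 2 v‖ := by
      rw [norm_toLp_mulVec_of_isometry hU, norm_toLp_mulVec_of_isometry hW]
      ring
  rw [vecNormSq_eq_norm_sq, vecNormSq_eq_norm_sq]
  nlinarith [norm_nonneg (WithLp.toLp 2 ((U + W) *ᵥ v))]

end VecNormSq

theorem div_four_le_sqrt {e δ : ℝ} (he : 0 ≤ e) (heδ : e ≤ δ) (he4 : e ≤ 4) : e / 4 ≤ √δ := calc
  e / 4 = √e * (√e / 4) := by rw [← mul_div_assoc, Real.mul_self_sqrt he]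
  _ ≤ √e * 1 := by
    gcongr
    rw [div_le_one four_pos, Real.sqrt_le_left zero_le_four]
    linarith
  _ ≤ √δ := by
    rw [mul_one]
    exact Real.sqrt_le_sqrt heδ

/-- If binary observables `Z, X` on `H_A` approximately anticommute on a bipartite
state `|ψ⟩` (i.e. `‖{Z,X} ⊗ Id |ψ⟩‖² ≤ δ`), then there is an isometry
`V : H_A → ℂ² ⊗ H_{A'}` under which `Z ≈ σ_Z ⊗ Id` and `X ≈ σ_X ⊗ Id` up to
state-dependent error `O(√δ)`. -/
theorem stmt13 : ∃ Cu : ℝ, 0 < Cu ∧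
    ∀ (a b : ℕ) (Z X : Matrix (Fin a) (Fin a) ℂ) (ψ : Fin a × Fin b → ℂ) (δ : ℝ),
      0 ≤ δ → Z.IsHermitian → X.IsHermitian →
      Z * Z = 1 → X * X = 1 → vecNormSq ψ = 1 →
      vecNormSq (((Z * X + X * Z) ⊗ₖ (1 : Matrix (Fin b) (Fin b) ℂ)).mulVec ψ) ≤ δ →
      ∃ (a' : ℕ) (V : Matrix (Fin 2 × Fin a') (Fin a) ℂ),
        Vᴴ * V = 1 ∧
        vecNormSq (((Z - Vᴴ * (pauliZ ⊗ₖ (1 : Matrix (Fin a') (Fin a') ℂ)) * V) ⊗ₖ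
            (1 : Matrix (Fin b) (Fin b) ℂ)).mulVec ψ) ≤ Cu * Real.sqrt δ ∧
        vecNormSq (((X - Vᴴ * (pauliX ⊗ₖ (1 : Matrix (Fin a') (Fin a') ℂ)) * V) ⊗ₖ
            (1 : Matrix (Fin b) (Fin b) ℂ)).mulVec ψ) ≤ Cu * Real.sqrt δ := by
  refine ⟨1, one_pos, fun a b Z X ψ δ _ hZ hX hZ2 hX2 hψ hanti => ?_⟩
  have hZ_unitary := hZ.isSelfAdjoint.mem_unitary_of_mul_self_eq_one hZ2
  have hX_unitary := hX.isSelfAdjoint.mem_unitary_of_mul_self_eq_one hX2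
  have hanti_le_four :
      vecNormSq (((Z * X + X * Z) ⊗ₖ (1 : Matrix (Fin b) (Fin b) ℂ)) *ᵥ ψ) ≤ 4 := by
    simpa [add_kronecker, hψ] using vecNormSq_add_mulVec_le
      (kronecker_one_isometry (Unitary.star_mul_self_of_mem (mul_mem hZ_unitary hX_unitary)))
      (kronecker_one_isometry (Unitary.star_mul_self_of_mem (mul_mem hX_unitary hZ_unitary))) ψ
  refine ⟨a, swapIsometry Z X, swapIsometry_conjTranspose_mul_self hZ hX hZ2 hX2, ?_, ?_⟩
  · rw [swapIsometry_conj_pauliZ hZ hX hZ2 hX2, sub_self, zero_kronecker, zero_mulVec, one_mul,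
      vecNormSq_eq_norm_sq, WithLp.toLp_zero, norm_zero, zero_pow two_ne_zero]
    exact Real.sqrt_nonneg δ
  · rw [sub_swapIsometry_conj_pauliX hZ hX hZ2, smul_kronecker, ← Matrix.mul_one 1,
      mul_kronecker_mul, smul_mulVec, ← mulVec_mulVec, vecNormSq_smul,
      vecNormSq_mulVec_of_isometry
        (kronecker_one_isometry (Unitary.star_mul_self_of_mem hZ_unitary)), one_mul]
    have h_half : ‖(1 / 2 : ℂ)‖ ^ 2 = 1 / 4 := by norm_num
    rw [h_half, one_div_mul_eq_div]
    exact div_four_le_sqrt (vecNormSq_nonneg _) hanti hanti_le_four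
end
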